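/- arXiv:1809.08938 — 2 statements merged into one kernel-verified Lean document; each statement's English description precedes it below -/
import Mathlib

section
/- Let C assign a rational number C(m; d) to each pair of a finite tuple m of elements of (ℤ^{≥0})³∖{0} and a nonzero d ∈ (ℤ^{≥0})³, with C(m; d) = 0 whenever |m₁|+⋯+|m_l| ≠ 2|d| + l (dimension vanishing). Suppose F, assigning a rational number F(m; d) to each pair of a (possibly empty) finite tuple m of elements of (ℤ^{≥0})³∖{0} and a nonzero d ∈ (ℤ^{≥0})³, satisfies: the divisor relation F((e_s)⌢m; d) = d_s·F(m; d) for s = 1,2,3; F(m; d) = 0 whenever some entry mᵢ of m has a coordinate ≥ 2; F((); e_s) = 1 for s = 1,2,3; and recursion (A) with complex input C at all admissible (r,d,m). Then for every r ∈ {1,2,3} and every d ∈ (ℤ^{≥0})³ with d ∉ {0, e_r}: (|d| − 1 − 2d_r)·F((); d) = Σ_{d′,d″ ∈ (ℤ^{≥0})³, |d′| ≥ 2, |d″| ≥ 2, d′+d″ = d+e_r} d′_r ( d″_r·C(|d|−1, |d′|−1) − d′_r·C(|d|−1, |d′|) )·F((); d′)·F((); d″). -/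
open Finset

/-- Binomial coefficient `C(n,k)` as a rational number, with the convention that
`C(n,k) = 0` whenever `k < 0` or `k > n`. -/
def binom (n k : ℤ) : ℚ :=
  if 0 ≤ k ∧ k ≤ n then (n.toNat.choose k.toNat : ℚ) else 0

/-- Elements of `(ℤ^{≥0})³`. -/
abbrev V3 := Fin 3 → ℕ

/-- `|d| = d₁ + d₂ + d₃`. -/
def nrm (v : V3) : ℕ := ∑ i, v i

/-- The vector `𝟏 = (1,1,1)`. -/
def oneV : V3 := fun _ => 1

/-- All entries of the tuple `m` lie in `(ℤ^{≥0})³ ∖ {0}`. -/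
def posV (m : List V3) : Prop := ∀ v ∈ m, v ≠ 0

/-- For `d ∈ (ℤ^{≥0})³` and a tuple `m = (m₁,…,m_l)` of elements of `(ℤ^{≥0})³`,
the number `k_d(m) = |d| + l − (|m₁| + ⋯ + |m_l|)`. -/
def kd3 (d : V3) (m : List V3) : ℤ :=
  (nrm d : ℤ) + m.length - ((m.map nrm).sum : ℤ)

/-- The subtuple of a tuple `m` indexed (in increasing order) by a set `S`
of positions. -/
def subt {α : Type*} (m : List α) (S : Finset (Fin m.length)) : List α :=
  (S.sort (· ≤ ·)).map m.get

/-- Vectors `d'` with `d'' + 2d' = d` for some `d''`, `d' ≠ 0`, `d'' ≠ 0`. -/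
def halfVec (d : V3) : Finset V3 :=
  (Fintype.piFinset fun i => Finset.range (d i + 1)).filter
    fun d' => (∀ i, 2 * d' i ≤ d i) ∧ d' ≠ 0 ∧ (fun i => d i - 2 * d' i) ≠ (0 : V3)

/-- Vectors `d'` with `d' + d'' = d` for some `d''`, `d' ≠ 0`, `d'' ≠ 0`. -/
def splitVec (d : V3) : Finset V3 :=
  (Fintype.piFinset fun i => Finset.range (d i + 1)).filter
    fun d' => d' ≠ 0 ∧ (fun i => d i - d' i) ≠ (0 : V3)

/-- The nonzero vectors `i ∈ (ℤ^{≥0})³` with `𝟏 − i` nonzero. -/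
def unitsV : Finset V3 :=
  (Fintype.piFinset fun _ => Finset.range 2).filter
    fun i => i ≠ 0 ∧ i ≠ oneV

/-- The term `T₀ = −2^{l−2} d_r C(m⌢(𝟏); d/2)` if all three coordinates of `d`
are even and `k_d(m) = 2`, and `0` otherwise; the power `2^{l−2}` is taken
in `ℚ`. -/
def TA (C : List V3 → V3 → ℚ) (d : V3) (r : Fin 3) (m : List V3) : ℚ :=
  if (∀ i, Even (d i)) ∧ kd3 d m = 2 then
    -((2 : ℚ) ^ ((m.length : ℤ) - 2)) * (d r : ℚ) * C (m ++ [oneV]) (fun i => d i / 2)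
  else 0

/-- The WDVV-type recursion (A) for the real invariants of `((ℙ¹)³, φ₃)` at
`(r, d, m)` with `m = x :: t`: the sums over `(I,J) ∈ P(l)` are encoded by the
subsets `S` of the positions of `t` placed in `I` (so `m_I = x :: t_S`,
`m_J = t_{Sᶜ}` and `|I| = |S| + 1`). -/
def RecA (C F : List V3 → V3 → ℚ) (r : Fin 3) (d : V3) (x : V3) (t : List V3) : Prop :=
  F ((x + Pi.single r 1) :: t) d =
    TA C d r (x :: t)
    - ∑ d' ∈ halfVec d, (d' r : ℚ) *
        ∑ S : Finset (Fin t.length), (2 : ℚ) ^ S.card *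
          ∑ i ∈ unitsV,
            C ((x :: subt t S) ++ [i]) d'
              * F ((fun s => 1 - i s) :: subt t Sᶜ) (fun s => d s - 2 * d' s)
    + ∑ d' ∈ splitVec d,
        ∑ S : Finset (Fin t.length),
          (((d r - d' r : ℕ) : ℚ) * binom (kd3 d (x :: t) - 2) (kd3 d' (x :: subt t S) - 1)
            - (d' r : ℚ) * binom (kd3 d (x :: t) - 2) (kd3 d' (x :: subt t S)))
          * F (x :: subt t S) d' * F (subt t Sᶜ) (fun s => d s - d' s)

/-! Apply (A) with degree `d + e_r` and the single insertion `m = (e_r)`. Its left side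
`F((2e_r); d + e_r)` vanishes because `H_r² = 0`, `T₀` vanishes unless `d = e_r`, and every
`C((e_r, i); d')` vanishes for dimension reasons. The divisor relation turns `F((e_r); d')` into
`d'_r F((); d')`. Among the splittings `d' + d'' = d + e_r` with `|d'| = 1` or `|d''| = 1` only
`d' = e_r` and `d' = d` survive, contributing `(d_r - |d| + 1) F((); d)` and `d_r F((); d)`. -/

lemma nrm_eq_zero_iff {v : V3} : nrm v = 0 ↔ v = 0 := by
  simp [nrm, Finset.sum_eq_zero_iff, funext_iff]

lemma one_le_nrm {v : V3} (hv : v ≠ 0) : 1 ≤ nrm v :=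
  Nat.pos_of_ne_zero (mt nrm_eq_zero_iff.mp hv)

lemma nrm_add (a b : V3) : nrm (a + b) = nrm a + nrm b :=
  Finset.sum_add_distrib

lemma nrm_single (r : Fin 3) : nrm (Pi.single r 1) = 1 := by
  simp [nrm]

lemma le_nrm (v : V3) (i : Fin 3) : v i ≤ nrm v :=
  Finset.single_le_sum (fun _ _ => Nat.zero_le _) (mem_univ i)

lemma nrm_sub_add {D d' : V3} (h : d' ≤ D) : nrm (fun i => D i - d' i) + nrm d' = nrm D := by
  rw [nrm, nrm, nrm, ← Finset.sum_add_distrib]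
  exact Finset.sum_congr rfl fun i _ => Nat.sub_add_cancel (h i)

lemma eq_single_of_nrm_eq_one {v : V3} {r : Fin 3} (h : nrm v = 1) (hr : v r ≠ 0) :
    v = Pi.single r 1 := by
  have hvr : v r = 1 := le_antisymm (h ▸ le_nrm v r) (Nat.one_le_iff_ne_zero.mpr hr)
  have hrest : ∑ i ∈ univ.erase r, v i = 0 := by
    have := Finset.add_sum_erase univ v (mem_univ r)
    rw [← nrm, h, hvr] at this
    omega
  funext i
  by_cases hi : i = r
  · subst hi; simpa using hvr
  · rw [Pi.single_eq_of_ne hi]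
    exact Finset.sum_eq_zero_iff.mp hrest i (mem_erase.mpr ⟨hi, mem_univ i⟩)

lemma single_ne_zero (r : Fin 3) : (Pi.single r 1 : V3) ≠ 0 :=
  fun h => by simpa using congrFun h r

lemma posV_singleton {v : V3} (hv : v ≠ 0) : posV [v] := by
  simpa [posV] using hv

lemma kd3_singleton_single (D : V3) (r : Fin 3) : kd3 D [Pi.single r 1] = nrm D := by
  simp [kd3, nrm_single]

lemma mem_piFinset_range_succ {D d' : V3} :
    d' ∈ Fintype.piFinset (fun i => range (D i + 1)) ↔ d' ≤ D := by
  simp [Fintype.mem_piFinset, Pi.le_def]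

lemma mem_splitVec {D d' : V3} :
    d' ∈ splitVec D ↔ d' ≤ D ∧ d' ≠ 0 ∧ (fun i => D i - d' i) ≠ (0 : V3) := by
  rw [splitVec, mem_filter, mem_piFinset_range_succ]

lemma nrm_le_two_of_mem_unitsV {i : V3} (hi : i ∈ unitsV) : nrm i ≤ 2 := by
  simp only [unitsV, mem_filter, Fintype.mem_piFinset, mem_range] at hi
  obtain ⟨hle, -, hne⟩ := hi
  by_contra! h3
  apply hne
  have := hle 0; have := hle 1; have := hle 2
  rw [nrm, Fin.sum_univ_three] at h3
  funext s
  fin_cases s <;> simp [oneV] <;> omega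

lemma binom_zero_right {n : ℤ} (h : 0 ≤ n) : binom n 0 = 1 := by
  simp [binom, h]

lemma binom_one_right {n : ℤ} (h : 0 ≤ n) : binom n 1 = n := by
  unfold binom
  split_ifs with h1
  · rw [Int.toNat_one, Nat.choose_one_right]; exact_mod_cast Int.toNat_of_nonneg h
  · rw [show n = 0 by omega]; simp

lemma binom_self {n : ℤ} (h : 0 ≤ n) : binom n n = 1 := by
  simp [binom, h]

lemma binom_of_lt {n k : ℤ} (h : n < k) : binom n k = 0 := by
  rw [binom, if_neg (by omega)]

lemma finset_nil_eq_empty (S : Finset (Fin ([] : List V3).length)) : S = ∅ :=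
  Finset.eq_empty_of_forall_notMem fun i _ => i.elim0

lemma subt_nil (S : Finset (Fin ([] : List V3).length)) : subt [] S = [] := by
  rw [subt, finset_nil_eq_empty S]
  simp

lemma sum_finset_nil {M : Type*} [AddCommMonoid M] (f : Finset (Fin ([] : List V3).length) → M) :
    ∑ S, f S = f ∅ :=
  Fintype.sum_eq_single ∅ fun S hS => (hS (finset_nil_eq_empty S)).elim

lemma TA_single_eq_zero (C : List V3 → V3 → ℚ) {r : Fin 3} {d : V3} (hdr : d ≠ Pi.single r 1) :
    TA C (d + Pi.single r 1) r [Pi.single r 1] = 0 := by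
  rw [TA, if_neg]
  rintro ⟨heven, hk⟩
  rw [kd3_singleton_single, nrm_add, nrm_single] at hk
  have hodd : d r % 2 = 1 := by
    obtain ⟨k, hk⟩ := heven r
    simp only [Pi.add_apply, Pi.single_eq_same] at hk
    omega
  exact hdr (eq_single_of_nrm_eq_one (by omega) (by omega))

-- `|e_r| + |i| ≤ 3 < 2|d'| + 2`.
lemma C_single_unit_eq_zero {C : List V3 → V3 → ℚ}
    (hC : ∀ d : V3, d ≠ 0 → ∀ m : List V3, posV m →
      (m.map nrm).sum ≠ 2 * nrm d + m.length → C m d = 0)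
    (r : Fin 3) {d' : V3} (hd' : d' ≠ 0) {i : V3} (hi : i ∈ unitsV) :
    C [Pi.single r 1, i] d' = 0 := by
  have hi0 : i ≠ 0 := (mem_filter.mp hi).2.1
  have hd'1 : 1 ≤ nrm d' := one_le_nrm hd'
  refine hC d' hd' _ ?_ ?_
  · simp [posV, hi0]
  · have := nrm_le_two_of_mem_unitsV hi
    simp only [List.map_cons, List.map_nil, List.sum_cons, List.sum_nil, nrm_single,
      List.length_cons, List.length_nil]
    omega

def wdvvSummand (F : List V3 → V3 → ℚ) (r : Fin 3) (D : V3) (n : ℤ) (d' : V3) : ℚ :=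
  (d' r : ℚ) * (((D r - d' r : ℕ) : ℚ) * binom n ((nrm d' : ℤ) - 1)
      - (d' r : ℚ) * binom n (nrm d' : ℤ))
    * F [] d' * F [] (fun i => D i - d' i)

theorem sum_splitVec_wdvvSummand_eq_zero {C F : List V3 → V3 → ℚ}
    (hC : ∀ d : V3, d ≠ 0 → ∀ m : List V3, posV m →
      (m.map nrm).sum ≠ 2 * nrm d + m.length → C m d = 0)
    (hdiv : ∀ s : Fin 3, ∀ d : V3, d ≠ 0 → ∀ m : List V3, posV m →
      F (Pi.single s 1 :: m) d = (d s : ℚ) * F m d)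
    (hbig : ∀ d : V3, d ≠ 0 → ∀ m : List V3, posV m →
      (∃ v ∈ m, ∃ i : Fin 3, 2 ≤ v i) → F m d = 0)
    (hA : ∀ (r : Fin 3) (d : V3) (x : V3) (t : List V3), d ≠ 0 → posV (x :: t) →
      2 ≤ kd3 d (x :: t) → RecA C F r d x t)
    {r : Fin 3} {d : V3} (hd0 : d ≠ 0) (hdr : d ≠ Pi.single r 1) :
    ∑ d' ∈ splitVec (d + Pi.single r 1),
      wdvvSummand F r (d + Pi.single r 1) ((nrm d : ℤ) - 1) d' = 0 := by
  set D := d + Pi.single r 1 with hD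
  have hnD : nrm D = nrm d + 1 := by rw [hD, nrm_add, nrm_single]
  have hnd : 1 ≤ nrm d := one_le_nrm hd0
  have hD0 : D ≠ 0 := fun h => by simp [← nrm_eq_zero_iff, hnD] at h
  have hrec := hA r D (Pi.single r 1) [] hD0 (posV_singleton (single_ne_zero r))
    (by rw [kd3_singleton_single, hnD]; omega)
  have hlhs : F [Pi.single r 1 + Pi.single r 1] D = 0 :=
    hbig D hD0 _ (posV_singleton fun h => by simpa using congrFun h r)
      ⟨_, List.mem_singleton_self _, r, by simp⟩
  have hhalf : ∀ d' ∈ halfVec D, ∀ S : Finset (Fin ([] : List V3).length), ∀ i ∈ unitsV,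
      C ((Pi.single r 1 :: subt [] S) ++ [i]) d' = 0 := fun d' hd' S i hi => by
    rw [subt_nil]
    exact C_single_unit_eq_zero hC r (mem_filter.mp hd').2.2.1 hi
  rw [RecA, hlhs, TA_single_eq_zero C hdr,
    sum_eq_zero fun d' hd' => mul_eq_zero_of_right _ <| sum_eq_zero fun S _ =>
      mul_eq_zero_of_right _ <| sum_eq_zero fun i hi => by rw [hhalf d' hd' S i hi, zero_mul],
    sub_zero, zero_add, eq_comm] at hrec
  rw [← hrec]
  refine sum_congr rfl fun d' hd' => ?_
  rw [sum_finset_nil, subt_nil, subt_nil, hdiv r d' (mem_splitVec.mp hd').2.1 [] (by simp [posV]),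
    kd3_singleton_single, kd3_singleton_single, hnD, wdvvSummand,
    show ((nrm d + 1 : ℕ) : ℤ) - 2 = nrm d - 1 by omega]
  ring

def splitVecNrmGeTwo (D : V3) : Finset V3 :=
  (Fintype.piFinset fun i => range (D i + 1)).filter
    fun d' => 2 ≤ nrm d' ∧ 2 ≤ nrm (fun i => D i - d' i)

lemma splitVecNrmGeTwo_subset_splitVec (D : V3) : splitVecNrmGeTwo D ⊆ splitVec D :=
  fun d' hd' => by
    obtain ⟨hpi, h1, h2⟩ := mem_filter.mp hd'
    refine mem_filter.mpr ⟨hpi, ?_, ?_⟩ <;> rintro h <;> simp [h, nrm] at h1 h2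

section wdvvSummand

variable (F : List V3 → V3 → ℚ) {r : Fin 3} {d : V3}

lemma wdvvSummand_single (hbase : F [] (Pi.single r 1) = 1) (hd0 : d ≠ 0) :
    wdvvSummand F r (d + Pi.single r 1) ((nrm d : ℤ) - 1) (Pi.single r 1)
      = ((d r : ℚ) - ((nrm d : ℚ) - 1)) * F [] d := by
  have hnd : 1 ≤ nrm d := one_le_nrm hd0
  have hsub : (fun i => (d + Pi.single r 1 : V3) i - (Pi.single r 1 : V3) i) = d :=
    funext fun i => Nat.add_sub_cancel _ _
  rw [wdvvSummand, hsub, hbase, nrm_single]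
  simp only [Pi.add_apply, Pi.single_eq_same, Nat.add_sub_cancel, Nat.cast_one, sub_self]
  rw [binom_zero_right (by omega), binom_one_right (by omega)]
  push_cast
  ring

lemma wdvvSummand_self (hbase : F [] (Pi.single r 1) = 1) (hd0 : d ≠ 0) :
    wdvvSummand F r (d + Pi.single r 1) ((nrm d : ℤ) - 1) d = (d r : ℚ) * F [] d := by
  have hnd : 1 ≤ nrm d := one_le_nrm hd0
  have hsub : (fun i => (d + Pi.single r 1 : V3) i - d i) = Pi.single r 1 :=
    funext fun i => by simp
  rw [wdvvSummand, hsub, hbase, binom_self (by omega), binom_of_lt (sub_one_lt _)]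
  simp

lemma wdvvSummand_eq_zero_of_nrm_eq_one {D d' : V3} {n : ℤ} (h1 : nrm d' = 1)
    (hne : d' ≠ Pi.single r 1) : wdvvSummand F r D n d' = 0 := by
  have : d' r = 0 := by_contra fun h => hne (eq_single_of_nrm_eq_one h1 h)
  simp [wdvvSummand, this]

lemma wdvvSummand_eq_zero_of_nrm_sub_eq_one {d' : V3} (hle : d' ≤ d + Pi.single r 1)
    (h1 : nrm (fun i => (d + Pi.single r 1 : V3) i - d' i) = 1) (hne : d' ≠ d) :
    wdvvSummand F r (d + Pi.single r 1) ((nrm d : ℤ) - 1) d' = 0 := by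
  have hr : (d + Pi.single r 1 : V3) r - d' r = 0 := by
    by_contra h
    refine hne (funext fun i => ?_)
    have hi := congrFun (eq_single_of_nrm_eq_one h1 h) i
    have := hle i
    simp only [Pi.add_apply] at hi this ⊢
    omega
  have hn : nrm d' = nrm d := by
    have := nrm_sub_add hle
    rw [h1, nrm_add, nrm_single] at this
    omega
  rw [wdvvSummand, hr, hn, binom_of_lt (sub_one_lt _)]
  simp

end wdvvSummand

lemma sum_splitVec_wdvvSummand (F : List V3 → V3 → ℚ) {r : Fin 3} {d : V3}
    (hbase : F [] (Pi.single r 1) = 1) (hd0 : d ≠ 0) (hdr : d ≠ Pi.single r 1) :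
    ∑ d' ∈ splitVec (d + Pi.single r 1), wdvvSummand F r (d + Pi.single r 1) ((nrm d : ℤ) - 1) d'
      = ((d r : ℚ) - ((nrm d : ℚ) - 1)) * F [] d + (d r : ℚ) * F [] d
        + ∑ d' ∈ splitVecNrmGeTwo (d + Pi.single r 1),
            wdvvSummand F r (d + Pi.single r 1) ((nrm d : ℤ) - 1) d' := by
  set D := d + Pi.single r 1 with hD
  have hsingle : Pi.single r 1 ∈ splitVec D := by
    refine mem_splitVec.mpr ⟨fun i => by simp [hD], single_ne_zero r, ?_⟩
    simpa [hD] using hd0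
  have hself : d ∈ (splitVec D).erase (Pi.single r 1) := by
    refine mem_erase.mpr ⟨hdr, mem_splitVec.mpr ⟨fun i => by simp [hD], hd0, ?_⟩⟩
    simp [hD]
  rw [← insert_erase hsingle, sum_insert (notMem_erase _ _), ← insert_erase hself,
    sum_insert (notMem_erase _ _), wdvvSummand_single F hbase hd0, wdvvSummand_self F hbase hd0,
    add_assoc]
  congr 2
  refine (sum_subset (fun d' hd' => ?_) fun d' hd' hnot => ?_).symm
  · have h2 := (mem_filter.mp hd').2
    refine mem_erase.mpr ⟨fun h => ?_, mem_erase.mpr ⟨fun h => ?_,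
      splitVecNrmGeTwo_subset_splitVec D hd'⟩⟩
    · rw [h] at h2; simp [hD, nrm_single] at h2
    · simp [h, nrm_single] at h2
  · obtain ⟨hne_self, hne_single, hsplit⟩ := by simpa only [mem_erase] using hd'
    obtain ⟨hle, hd'0, hd''0⟩ := mem_splitVec.mp hsplit
    have h1 := one_le_nrm hd'0
    have h1' := one_le_nrm hd''0
    have : ¬(2 ≤ nrm d' ∧ 2 ≤ nrm (fun i => D i - d' i)) := fun h =>
      hnot (mem_filter.mpr ⟨mem_piFinset_range_succ.mpr hle, h⟩)
    rcases not_and_or.mp this with h | h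
    · exact wdvvSummand_eq_zero_of_nrm_eq_one F (by omega) hne_single
    · have : nrm (fun i => D i - d' i) = 1 := by omega
      exact wdvvSummand_eq_zero_of_nrm_sub_eq_one F hle this hne_self

/-- The WDVV-type relation (A) for `((ℙ¹)³, φ₃)` implies the quadratic relation
determining the purely real point-counting invariants `F([]; d)`. -/
theorem stmt_17 (C F : List V3 → V3 → ℚ)
    (hC : ∀ d : V3, d ≠ 0 → ∀ m : List V3, posV m →
      (m.map nrm).sum ≠ 2 * nrm d + m.length → C m d = 0)
    (hdiv : ∀ s : Fin 3, ∀ d : V3, d ≠ 0 → ∀ m : List V3, posV m →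
      F (Pi.single s 1 :: m) d = (d s : ℚ) * F m d)
    (hbig : ∀ d : V3, d ≠ 0 → ∀ m : List V3, posV m →
      (∃ v ∈ m, ∃ i : Fin 3, 2 ≤ v i) → F m d = 0)
    (hbase : ∀ s : Fin 3, F [] (Pi.single s 1) = 1)
    (hA : ∀ (r : Fin 3) (d : V3) (x : V3) (t : List V3), d ≠ 0 → posV (x :: t) →
      2 ≤ kd3 d (x :: t) → RecA C F r d x t) :
    ∀ (r : Fin 3) (d : V3), d ≠ 0 → d ≠ Pi.single r 1 →
      ((nrm d : ℚ) - 1 - 2 * (d r : ℚ)) * F [] d =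
        ∑ d' ∈ (Fintype.piFinset fun i => Finset.range (((d + Pi.single r 1 : V3) i + 1))).filter
            (fun d' => 2 ≤ nrm d' ∧ 2 ≤ nrm (fun i => (d + Pi.single r 1 : V3) i - d' i)),
          (d' r : ℚ)
            * ((((d + Pi.single r 1 : V3) r - d' r : ℕ) : ℚ)
                  * binom ((nrm d : ℤ) - 1) ((nrm d' : ℤ) - 1)
                - (d' r : ℚ) * binom ((nrm d : ℤ) - 1) (nrm d' : ℤ))
            * F [] d' * F [] (fun i => (d + Pi.single r 1 : V3) i - d' i) := by
  intro r d hd0 hdr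
  have hwdvv := sum_splitVec_wdvvSummand_eq_zero hC hdiv hbig hA hd0 hdr
  rw [sum_splitVec_wdvvSummand F (hbase r) hd0 hdr] at hwdvv
  change _ = ∑ d' ∈ splitVecNrmGeTwo (d + Pi.single r 1),
    wdvvSummand F r (d + Pi.single r 1) ((nrm d : ℤ) - 1) d'
  linarith
end

section
/- Let C assign a rational number C(m; (a,b)) to each pair of a finite tuple m of elements of (ℤ^{≥0})²∖{0} and a nonzero (a,b) ∈ (ℤ^{≥0})². Then there is at most one F, assigning a rational number F(m; (a,b)) to each pair of a (possibly empty) finite tuple m of elements of (ℤ^{≥0})²∖{0} and a nonzero (a,b) ∈ (ℤ^{≥0})², such that: F satisfies the divisor relations F(((1,0))⌢m; (a,b)) = a·F(m; (a,b)) and F(((0,1))⌢m; (a,b)) = b·F(m; (a,b)); F(m; d) = 0 whenever some entry mᵢ = (r,s) of m has r ≥ 3 or s ≥ 2; F(m; d) = 0 whenever k_d(m) is even; F(m; d) = 0 whenever k_d(m) < 0; F((); (0,1)) = 1; 2·F(((2,0)); (1,0)) = −1; F((); (1,1)) = 1; F satisfies recursion (A′) with complex input C at all admissible (r,d,m); F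 satisfies (B′) at every (a,b) ∈ (ℤ^{≥0})²∖{(0,0),(0,1)}; and F satisfies (C′) at every (a,b) ∈ (ℤ^{≥0})²∖{(0,0)}. That is, any two such F agree everywhere. -/
open Finset

/-- Elements of `(ℤ^{≥0})²`, written as functions on `Fin 2`. -/
abbrev V2 := Fin 2 → ℕ

/-- The vector `(2,1)`. -/
def topV : V2 := ![2, 1]

/-- All entries of the tuple `m` lie in `(ℤ^{≥0})² ∖ {0}`. -/
def posV2 (m : List V2) : Prop := ∀ v ∈ m, v ≠ 0

/-- For `d = (a,b)` and a tuple `m = (m₁,…,m_l)` of elements of `(ℤ^{≥0})²`,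
the number `k_d(m) = 2a + b + l − (|m₁| + ⋯ + |m_l|)` with `|(r,s)| = r + s`. -/
def kd2 (d : V2) (m : List V2) : ℤ :=
  2 * (d 0 : ℤ) + (d 1 : ℤ) + m.length - (((m.map fun v => v 0 + v 1).sum : ℕ) : ℤ)

/-- Vectors `d'` with `d' + d'' = d` for some `d''`, `d' ≠ 0`, `d'' ≠ 0`. -/
def splitV2 (d : V2) : Finset V2 :=
  (Fintype.piFinset fun i => Finset.range (d i + 1)).filter
    fun d' => d' ≠ 0 ∧ (fun i => d i - d' i) ≠ (0 : V2)

/-- The nonzero vectors `i ∈ (ℤ^{≥0})²` with `(2,1) − i` nonzero. -/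
def unitsV2 : Finset V2 :=
  (Fintype.piFinset fun s => Finset.range (topV s + 1)).filter
    fun i => i ≠ 0 ∧ i ≠ topV

/-- The term `T₀ = −2^{l−1} d_r C(m⌢((2,1)); d)` if `k_d(m) = 2`, and `0`
otherwise; the power `2^{l−1}` is taken in `ℚ`. -/
def TAtw (C : List V2 → V2 → ℚ) (d : V2) (r : Fin 2) (m : List V2) : ℚ :=
  if kd2 d m = 2 then
    -((2 : ℚ) ^ ((m.length : ℤ) - 1)) * (d r : ℚ) * C (m ++ [topV]) d
  else 0

/-- The WDVV-type recursion (A′) for the real invariants of `((ℙ¹)³, φ₃')` at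
`(r, d, m)` with `m = x :: t`: the sums over `(I,J) ∈ P(l)` are encoded by the
subsets `S` of the positions of `t` placed in `I` (so `m_I = x :: t_S`,
`m_J = t_{Sᶜ}` and `|I| = |S| + 1`). -/
def RecAtw (C F : List V2 → V2 → ℚ) (r : Fin 2) (d : V2) (x : V2) (t : List V2) : Prop :=
  F ((x + Pi.single r 1) :: t) d =
    TAtw C d r (x :: t)
    - ∑ d' ∈ splitV2 d, (d' r : ℚ) *
        ∑ S : Finset (Fin t.length), (2 : ℚ) ^ S.card *
          ∑ i ∈ unitsV2,
            C ((x :: subt t S) ++ [i]) d'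
              * F ((fun s => topV s - i s) :: subt t Sᶜ) (fun s => d s - d' s)
    + ∑ d' ∈ splitV2 d,
        ∑ S : Finset (Fin t.length),
          (((d r - d' r : ℕ) : ℚ) * binom (kd2 d (x :: t) - 2) (kd2 d' (x :: subt t S) - 1)
            - (d' r : ℚ) * binom (kd2 d (x :: t) - 2) (kd2 d' (x :: subt t S)))
          * F (x :: subt t S) d' * F (subt t Sᶜ) (fun s => d s - d' s)

/-- Relation (B′) for the purely real point-counting invariants of
`((ℙ¹)³, φ₃')`. -/
def RelB (F : List V2 → V2 → ℚ) (a b : ℕ) : Prop :=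
  (2 * (a : ℚ) - 1 - (b : ℚ)) * F [] ![a, b] =
    ∑ pq ∈ (Finset.HasAntidiagonal.antidiagonal a ×ˢ Finset.HasAntidiagonal.antidiagonal (b + 1)).filter
        (fun pq => 1 ≤ pq.1.1 ∧ 1 ≤ pq.1.2 ∧ 1 ≤ pq.2.1 ∧ 1 ≤ pq.2.2),
      (pq.2.1 : ℚ)
        * ((pq.2.2 : ℚ)
              * binom (2 * (a : ℤ) + (b : ℤ) - 1) (2 * (pq.1.1 : ℤ) + (pq.2.1 : ℤ) - 1)
            - (pq.2.1 : ℚ)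
              * binom (2 * (a : ℤ) + (b : ℤ) - 1) (2 * (pq.1.1 : ℤ) + (pq.2.1 : ℤ)))
        * F [] ![pq.1.1, pq.2.1] * F [] ![pq.1.2, pq.2.2]

/-- Relation (C′) for the purely real invariants of `((ℙ¹)³, φ₃')`, involving one
`H₁H₂`-insertion (recorded as `2 F(((2,0)); ·)`). -/
def RelC (F : List V2 → V2 → ℚ) (a b : ℕ) : Prop :=
  ((b : ℚ) - 1) * F [] ![a, b] =
    ∑ pq ∈ (Finset.HasAntidiagonal.antidiagonal (a + 1) ×ˢ Finset.HasAntidiagonal.antidiagonal b).filter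
        (fun pq => 1 ≤ pq.1.1 ∧ 1 ≤ pq.1.2 ∧ 1 ≤ pq.2.1 ∧ 1 ≤ pq.2.2),
      ((pq.1.1 : ℚ)
            * binom (2 * (a : ℤ) + (b : ℤ) - 1) (2 * (pq.1.1 : ℤ) + (pq.2.1 : ℤ) - 1)
          - (pq.1.2 : ℚ)
            * binom (2 * (a : ℤ) + (b : ℤ) - 1) (2 * (pq.1.1 : ℤ) + (pq.2.1 : ℤ) - 2))
        * (2 * F [![2, 0]] ![pq.1.1, pq.2.1]) * F [] ![pq.1.2, pq.2.2]

/-- The full set of conditions on the real genus 0 invariants `F(m; d)` of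
`((ℙ¹)³, φ₃')`: the divisor relations, the vanishing statements, the base
values, the recursion (A′), and the relations (B′) and (C′). -/
def GoodTw (C F : List V2 → V2 → ℚ) : Prop :=
  (∀ d : V2, d ≠ 0 → ∀ m : List V2, posV2 m →
      F (Pi.single 0 1 :: m) d = (d 0 : ℚ) * F m d)
    ∧ (∀ d : V2, d ≠ 0 → ∀ m : List V2, posV2 m →
        F (Pi.single 1 1 :: m) d = (d 1 : ℚ) * F m d)
    ∧ (∀ d : V2, d ≠ 0 → ∀ m : List V2, posV2 m →
        (∃ v ∈ m, 3 ≤ v 0 ∨ 2 ≤ v 1) → F m d = 0)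
    ∧ (∀ d : V2, d ≠ 0 → ∀ m : List V2, posV2 m → kd2 d m % 2 = 0 → F m d = 0)
    ∧ (∀ d : V2, d ≠ 0 → ∀ m : List V2, posV2 m → kd2 d m < 0 → F m d = 0)
    ∧ F [] ![0, 1] = 1
    ∧ 2 * F [![2, 0]] ![1, 0] = -1
    ∧ F [] ![1, 1] = 1
    ∧ (∀ (r : Fin 2) (d : V2) (x : V2) (t : List V2), d ≠ 0 → posV2 (x :: t) →
        2 ≤ kd2 d (x :: t) → RecAtw C F r d x t)
    ∧ (∀ a b : ℕ, (a, b) ≠ (0, 0) → (a, b) ≠ (0, 1) → RelB F a b)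
    ∧ (∀ a b : ℕ, (a, b) ≠ (0, 0) → RelC F a b)

/-!
Uniqueness is proved by strong induction on `|d| = a + b`, and for fixed `d` by induction on
the length of `m`. A leading insertion `e_r` is removed by the divisor equations. Any other
nonzero insertion is `x + e_r` with `x ≠ 0`: if `k_d(x :: t) ≥ 2`, recursion (A′) expresses
`F((x + e_r) :: t; d)` through `C` and through values of `F` in the degrees `d′, d″` of a
splitting `d = d′ + d″` into nonzero parts, both of smaller `|·|`; otherwise
`k_d((x + e_r) :: t) ≤ 0` and the value vanishes by parity or negativity. For `m = ()` and
`d = (a, b)`, parity kills even `b`; for odd `b`, apart from the base values at `(0,1)` and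
`(1,1)`, relation (B′) determines `F((); d)` when `2a − 1 − b ≠ 0`, and otherwise `b = 2a − 1 ≥ 3`
and (C′) does, with coefficient `b − 1 ≠ 0`; their right-hand sides only involve degrees of
smaller `|·|`.
-/

def AgreeBelow (F F' : List V2 → V2 → ℚ) (n : ℕ) : Prop :=
  ∀ d : V2, d 0 + d 1 < n → d ≠ 0 → ∀ m : List V2, posV2 m → F m d = F' m d

lemma AgreeBelow.pair {F F' : List V2 → V2 → ℚ} {n p q : ℕ} (h : AgreeBelow F F' n)
    (hlt : p + q < n) (hq : 0 < q) {m : List V2} (hm : posV2 m) :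
    F m ![p, q] = F' m ![p, q] := by
  refine h _ (by simpa using hlt) (fun h0 => ?_) m hm
  have hq0 := congrFun h0 1
  simp only [Matrix.cons_val_one, Matrix.cons_val_fin_one, Pi.zero_apply] at hq0
  omega

lemma Pi.eq_single_or_eq_add_single {ι : Type*} [DecidableEq ι] {v : ι → ℕ} (hv : v ≠ 0) :
    (∃ r, v = Pi.single r 1) ∨ ∃ x : ι → ℕ, x ≠ 0 ∧ ∃ r, v = x + Pi.single r 1 := by
  obtain ⟨r, hr⟩ := Function.ne_iff.mp hv
  have hsplit : v = (v - Pi.single r 1) + Pi.single r 1 := by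
    ext i
    by_cases hi : i = r
    · subst hi; simp only [Pi.zero_apply, Pi.add_apply, Pi.sub_apply, Pi.single_eq_same] at hr ⊢
      omega
    · simp [hi]
  by_cases hx : v - Pi.single r 1 = 0
  · exact Or.inl ⟨r, by rwa [hx, zero_add] at hsplit⟩
  · exact Or.inr ⟨_, hx, r, hsplit⟩

lemma posV2_nil : posV2 [] := fun _ h => absurd h List.not_mem_nil

lemma posV2_cons {v : V2} {t : List V2} : posV2 (v :: t) ↔ v ≠ 0 ∧ posV2 t :=
  List.forall_mem_cons

lemma posV2_subt {m : List V2} (h : posV2 m) (S : Finset (Fin m.length)) :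
    posV2 (subt m S) := by
  intro v hv
  obtain ⟨i, -, rfl⟩ := List.mem_map.mp hv
  exact h _ (List.get_mem m i)

lemma kd2_nil (d : V2) : kd2 d [] = 2 * (d 0 : ℤ) + d 1 := by
  simp [kd2]

lemma kd2_cons_add_single (d x : V2) (r : Fin 2) (t : List V2) :
    kd2 d ((x + Pi.single r 1) :: t) = kd2 d (x :: t) - 1 := by
  fin_cases r <;> simp [kd2] <;> ring

lemma mem_splitV2 {d d' : V2} (h : d' ∈ splitV2 d) :
    d' ≠ 0 ∧ (fun i => d i - d' i) ≠ (0 : V2) ∧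
      d' 0 + d' 1 < d 0 + d 1 ∧ (d 0 - d' 0) + (d 1 - d' 1) < d 0 + d 1 := by
  simp only [splitV2, Finset.mem_filter, Fintype.mem_piFinset, Finset.mem_range] at h
  obtain ⟨hle, h1, h2⟩ := h
  have hle0 := hle 0
  have hle1 := hle 1
  have h1' : ¬(d' 0 = 0 ∧ d' 1 = 0) := fun h => h1 (funext (Fin.forall_fin_two.mpr h))
  have h2' : ¬(d 0 - d' 0 = 0 ∧ d 1 - d' 1 = 0) := fun h =>
    h2 (funext (Fin.forall_fin_two.mpr h))
  exact ⟨h1, h2, by omega, by omega⟩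

lemma topV_sub_ne_zero {i : V2} (h : i ∈ unitsV2) : (fun s => topV s - i s) ≠ (0 : V2) := by
  simp only [unitsV2, Finset.mem_filter, Fintype.mem_piFinset, Finset.mem_range] at h
  obtain ⟨hle, -, hne⟩ := h
  refine fun h0 => hne (funext fun s => ?_)
  have hs : topV s - i s = 0 := congrFun h0 s
  have := hle s
  omega

section Uniqueness

variable {C F F' : List V2 → V2 → ℚ}

lemma RelB.eq_of_agreeBelow {a b : ℕ} (hB : RelB F a b) (hB' : RelB F' a b)
    (hab : 2 * a ≠ b + 1) (IH : AgreeBelow F F' (a + b)) : F [] ![a, b] = F' [] ![a, b] := by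
  have hcoef : (2 * (a : ℚ) - 1 - b) ≠ 0 := by
    intro h0
    exact hab (by exact_mod_cast (by linarith : (2 * a : ℚ) = b + 1))
  refine mul_left_cancel₀ hcoef (hB.trans (Eq.trans ?_ hB'.symm))
  refine Finset.sum_congr rfl fun pq hpq => ?_
  simp only [Finset.mem_filter, Finset.mem_product,
    Finset.HasAntidiagonal.mem_antidiagonal] at hpq
  rw [IH.pair (by omega) (by omega) posV2_nil,
    IH.pair (by omega) (by omega) posV2_nil]

lemma RelC.eq_of_agreeBelow {a b : ℕ} (hC : RelC F a b) (hC' : RelC F' a b) (hb : b ≠ 1)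
    (IH : AgreeBelow F F' (a + b)) : F [] ![a, b] = F' [] ![a, b] := by
  have hcoef : ((b : ℚ) - 1) ≠ 0 := sub_ne_zero.mpr (by exact_mod_cast hb)
  have h20 : posV2 [![2, 0]] := by simp [posV2]
  refine mul_left_cancel₀ hcoef (hC.trans (Eq.trans ?_ hC'.symm))
  refine Finset.sum_congr rfl fun pq hpq => ?_
  simp only [Finset.mem_filter, Finset.mem_product,
    Finset.HasAntidiagonal.mem_antidiagonal] at hpq
  rw [IH.pair (by omega) (by omega) h20, IH.pair (by omega) (by omega) posV2_nil]

lemma RecAtw.eq_of_agreeBelow {r : Fin 2} {d x : V2} {t : List V2}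
    (hA : RecAtw C F r d x t) (hA' : RecAtw C F' r d x t) (hxt : posV2 (x :: t))
    (IH : AgreeBelow F F' (d 0 + d 1)) :
    F ((x + Pi.single r 1) :: t) d = F' ((x + Pi.single r 1) :: t) d := by
  obtain ⟨hx, ht⟩ := posV2_cons.mp hxt
  rw [hA, hA']
  congr 1
  · refine congrArg _ (Finset.sum_congr rfl fun d' hd' => ?_)
    obtain ⟨-, hd'', -, hlt''⟩ := mem_splitV2 hd'
    refine congrArg _ (Finset.sum_congr rfl fun S _ => congrArg _ ?_)
    refine Finset.sum_congr rfl fun i hi => congrArg _ ?_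
    exact IH _ hlt'' hd'' _ (posV2_cons.mpr ⟨topV_sub_ne_zero hi, posV2_subt ht _⟩)
  · refine Finset.sum_congr rfl fun d' hd' => Finset.sum_congr rfl fun S _ => ?_
    obtain ⟨hd', hd'', hlt', hlt''⟩ := mem_splitV2 hd'
    rw [IH d' hlt' hd' _ (posV2_cons.mpr ⟨hx, posV2_subt ht _⟩),
      IH _ hlt'' hd'' _ (posV2_subt ht _)]

namespace GoodTw

lemma cons_single (hF : GoodTw C F) (r : Fin 2) {d : V2} (hd : d ≠ 0) {m : List V2}
    (hm : posV2 m) : F (Pi.single r 1 :: m) d = d r * F m d := by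
  fin_cases r
  exacts [hF.1 d hd m hm, hF.2.1 d hd m hm]

lemma eq_zero_of_kd2_nonpos (hF : GoodTw C F) {d : V2} (hd : d ≠ 0) {m : List V2}
    (hm : posV2 m) (hk : kd2 d m ≤ 0) : F m d = 0 := by
  obtain ⟨-, -, -, hpar, hneg, -⟩ := hF
  rcases hk.lt_or_eq with hlt | h0
  exacts [hneg d hd m hm hlt, hpar d hd m hm (by rw [h0]; rfl)]

lemma nil_eq_of_agreeBelow (hF : GoodTw C F) (hF' : GoodTw C F') {a b : ℕ}
    (hd : (![a, b] : V2) ≠ 0) (IH : AgreeBelow F F' (a + b)) : F [] ![a, b] = F' [] ![a, b] := by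
  have hab : (a, b) ≠ (0, 0) := by
    rintro ⟨⟩
    exact hd (by ext i; fin_cases i <;> rfl)
  obtain ⟨-, -, -, hpar, -, h01, -, h11, -, hB, hC⟩ := hF
  obtain ⟨-, -, -, hpar', -, h01', -, h11', -, hB', hC'⟩ := hF'
  rcases Nat.even_or_odd b with ⟨c, rfl⟩ | hodd
  · have hk : kd2 ![a, c + c] [] % 2 = 0 := by 
      rw [kd2_nil]
      simp only [Matrix.cons_val_zero, Matrix.cons_val_one, Matrix.cons_val_fin_one]
      omega
    rw [hpar _ hd [] posV2_nil hk, hpar' _ hd [] posV2_nil hk]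
  obtain ⟨c, rfl⟩ := hodd
  by_cases h01ab : a = 0 ∧ c = 0
  · obtain ⟨rfl, rfl⟩ := h01ab
    exact h01.trans h01'.symm
  by_cases h11ab : a = 1 ∧ c = 0
  · obtain ⟨rfl, rfl⟩ := h11ab
    exact h11.trans h11'.symm
  by_cases hcrit : 2 * a = 2 * c + 1 + 1
  · exact (hC a _ hab).eq_of_agreeBelow (hC' a _ hab) (by omega) IH
  · have h01ab' : (a, 2 * c + 1) ≠ (0, 1) := by
      simp only [ne_eq, Prod.mk.injEq]
      omega
    exact (hB a _ hab h01ab').eq_of_agreeBelow (hB' a _ hab h01ab') hcrit IH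

lemma cons_add_single_eq_of_agreeBelow (hF : GoodTw C F) (hF' : GoodTw C F') {r : Fin 2}
    {d x : V2} {t : List V2} (hd : d ≠ 0) (hxt : posV2 (x :: t))
    (IH : AgreeBelow F F' (d 0 + d 1)) :
    F ((x + Pi.single r 1) :: t) d = F' ((x + Pi.single r 1) :: t) d := by
  by_cases hk : 2 ≤ kd2 d (x :: t)
  · obtain ⟨-, -, -, -, -, -, -, -, hA, -⟩ := hF
    obtain ⟨-, -, -, -, -, -, -, -, hA', -⟩ := hF'
    exact (hA r d x t hd hxt hk).eq_of_agreeBelow (hA' r d x t hd hxt hk) hxt IH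
  · have hne : x + Pi.single r 1 ≠ 0 := fun h0 => by simpa using congrFun h0 r
    have hm : posV2 ((x + Pi.single r 1) :: t) := posV2_cons.mpr ⟨hne, (posV2_cons.mp hxt).2⟩
    have hk' : kd2 d ((x + Pi.single r 1) :: t) ≤ 0 := by rw [kd2_cons_add_single]; omega
    rw [hF.eq_zero_of_kd2_nonpos hd hm hk', hF'.eq_zero_of_kd2_nonpos hd hm hk']

lemma eq_of_agreeBelow (hF : GoodTw C F) (hF' : GoodTw C F') {d : V2} (hd : d ≠ 0)
    (IH : AgreeBelow F F' (d 0 + d 1)) {m : List V2} (hm : posV2 m) : F m d = F' m d := by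
  induction m with
  | nil =>
    have hd2 : d = ![d 0, d 1] := by ext i; fin_cases i <;> rfl
    rw [hd2] at hd ⊢
    exact hF.nil_eq_of_agreeBelow hF' hd IH
  | cons h t iht =>
    obtain ⟨hh, ht⟩ := posV2_cons.mp hm
    rcases Pi.eq_single_or_eq_add_single hh with ⟨r, rfl⟩ | ⟨x, hx, r, rfl⟩
    · rw [hF.cons_single r hd ht, hF'.cons_single r hd ht, iht ht]
    · exact hF.cons_add_single_eq_of_agreeBelow hF' hd (posV2_cons.mpr ⟨hx, ht⟩) IH

end GoodTw

end Uniqueness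

/-- There is at most one function `F` on pairs of a tuple of nonzero vectors and
a nonzero degree satisfying all the conditions of `GoodTw`. -/
theorem stmt_19 (C F F' : List V2 → V2 → ℚ)
    (hF : GoodTw C F) (hF' : GoodTw C F') :
    ∀ d : V2, d ≠ 0 → ∀ m : List V2, posV2 m → F m d = F' m d := by
  intro d
  induction hn : d 0 + d 1 using Nat.strong_induction_on generalizing d with
  | _ n ih =>
    intro hd m hm
    exact hF.eq_of_agreeBelow hF' hd (fun d' hlt => ih _ (hn ▸ hlt) d' rfl) hm
end
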